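/- The covariance of the scaled area and the scaled perimeter satisfies Cov(A_m, P_m) = (1/m²)·p(1−p)·( 4m²(1 − 2p) + 8mp ). -/

import Mathlib

open MeasureTheory ProbabilityTheory Finset Filter

noncomputable section

/-- The scaled total area `A_{m} = (1/m) ∑_{i,j=1}^m Z_{i,j}` of a binary image `Z`. -/
def areaSum (m : ℕ) (Z : ℕ → ℕ → ℝ) : ℝ :=
  (1 / (m : ℝ)) * ∑ i ∈ Finset.Icc 1 m, ∑ j ∈ Finset.Icc 1 m, Z i j

/-- The scaled perimeter `P_{m} = (1/m) ∑_{i,j=1}^m ψ(i,j)` of a binary image `Z`,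
where `ψ(i,j) = 0` if `Z i j = 0` and `ψ(i,j) = 4 - (Z (i-1) j + Z (i+1) j + Z i (j-1) + Z i (j+1))`
if `Z i j = 1`. -/
def perimSum (m : ℕ) (Z : ℕ → ℕ → ℝ) : ℝ :=
  (1 / (m : ℝ)) * ∑ i ∈ Finset.Icc 1 m, ∑ j ∈ Finset.Icc 1 m,
    (if Z i j = 1 then 4 - (Z (i - 1) j + Z (i + 1) j + Z i (j - 1) + Z i (j + 1)) else 0)

/-- The scaled Euler characteristic `χ_{m} = (1/m) ∑_{i,j=1}^m W_{i,j}` of a binary image `Z`,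
where, with `S = Z i j + Z (i+1) j + Z i (j+1) + Z (i+1) (j+1)`: `W = 1/4` if `S = 1`;
`W = -1/4` if `S = 3`; `W = -1/2` if `S = 2` and one of the two diagonal products is `1`;
and `W = 0` otherwise. -/
def eulerSum (m : ℕ) (Z : ℕ → ℕ → ℝ) : ℝ :=
  (1 / (m : ℝ)) * ∑ i ∈ Finset.Icc 1 m, ∑ j ∈ Finset.Icc 1 m,
    (if Z i j + Z (i + 1) j + Z i (j + 1) + Z (i + 1) (j + 1) = 1 then (1 / 4 : ℝ)
      else if Z i j + Z (i + 1) j + Z i (j + 1) + Z (i + 1) (j + 1) = 3 then -(1 / 4)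
      else if Z i j + Z (i + 1) j + Z i (j + 1) + Z (i + 1) (j + 1) = 2 ∧
          (Z i j * Z (i + 1) (j + 1) = 1 ∨ Z (i + 1) j * Z i (j + 1) = 1) then -(1 / 2)
      else 0)

/-!
Off a null set every cell is `0` or `1`, and then `A_m = S / m` and `P_m = (4 S - T) / m`, where
`S = ∑ Z_q` over the grid and `T = ∑ Z_q Z_r` over ordered pairs `(q, r)` of adjacent grid cells:
each adjacent pair of black cells hides one edge of each of its two cells. By bilinearity,
`Cov(A_m, P_m) = (4 Var S - Cov(S, T)) / m²`. Independence gives `Var S = m² p (1 - p)`, and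
`Cov(Z_k, Z_q Z_r)` vanishes unless `k ∈ {q, r}`, where it is `p² - p³`; so each of the
`4 m (m - 1)` adjacent ordered pairs contributes `2 p² (1 - p)` to `Cov(S, T)`.
-/

open Function

namespace ProbabilityTheory

variable {Ω ι : Type*} [MeasurableSpace Ω] {μ : Measure Ω}

lemma covariance_congr_ae {X X' Y Y' : Ω → ℝ} (hX : X =ᵐ[μ] X') (hY : Y =ᵐ[μ] Y') :
    cov[X, Y; μ] = cov[X', Y'; μ] := by
  rw [covariance, covariance, integral_congr_ae hX, integral_congr_ae hY]
  exact integral_congr_ae (by filter_upwards [hX, hY] with ω hXω hYω; rw [hXω, hYω])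

lemma ae_eq_zero_or_one_of_measure_eq [IsProbabilityMeasure μ] {f : Ω → ℝ} (hf : Measurable f)
    {p : ℝ} (hp0 : 0 ≤ p) (hp1 : p ≤ 1) (h1 : μ {ω | f ω = 1} = ENNReal.ofReal p)
    (h0 : μ {ω | f ω = 0} = ENNReal.ofReal (1 - p)) :
    ∀ᵐ ω ∂μ, f ω = 0 ∨ f ω = 1 := by
  have hdisj : Disjoint {ω | f ω = 0} {ω | f ω = 1} :=
    Set.disjoint_left.2 fun ω h0 h1 => zero_ne_one ((h0 : f ω = 0).symm.trans h1)
  have h01 : MeasurableSet {ω | f ω = 0 ∨ f ω = 1} :=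
    (hf (measurableSet_singleton 0)).union (hf (measurableSet_singleton 1))
  rw [ae_iff_measure_eq h01.nullMeasurableSet, measure_univ, Set.ofPred_or,
    measure_union hdisj (hf (measurableSet_singleton 1)), h0, h1,
    ← ENNReal.ofReal_add (by linarith) hp0, sub_add_cancel, ENNReal.ofReal_one]

lemma integral_eq_measureReal_of_ae_eq_zero_or_one {f : Ω → ℝ} (hf : Measurable f)
    (h : ∀ᵐ ω ∂μ, f ω = 0 ∨ f ω = 1) : μ[f] = μ.real {ω | f ω = 1} := by
  rw [← integral_indicator_one (s := {ω | f ω = 1}) (hf (measurableSet_singleton 1))]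
  refine integral_congr_ae (h.mono fun ω hω => ?_)
  rcases hω with hω | hω <;> simp [hω]

lemma memLp_two_of_ae_eq_zero_or_one [IsFiniteMeasure μ] {f : Ω → ℝ}
    (hf : AEStronglyMeasurable f μ) (h : ∀ᵐ ω ∂μ, f ω = 0 ∨ f ω = 1) : MemLp f 2 μ :=
  MemLp.of_bound hf 1 (h.mono fun ω hω => by rcases hω with hω | hω <;> simp [hω])

structure IsBernoulliFamily (μ : Measure Ω) (s : Finset ι) (Y : ι → Ω → ℝ) (p : ℝ) : Prop where
  measurable : ∀ i ∈ s, Measurable (Y i)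
  ae_eq_zero_or_one : ∀ i ∈ s, ∀ᵐ ω ∂μ, Y i ω = 0 ∨ Y i ω = 1
  integral_eq : ∀ i ∈ s, μ[Y i] = p
  iIndepFun : iIndepFun (fun i : s => Y i) μ

namespace IsBernoulliFamily

variable {s : Finset ι} {Y : ι → Ω → ℝ} {p : ℝ} (hY : IsBernoulliFamily μ s Y p) {i j k : ι}
include hY

lemma ae_mul_self (hi : i ∈ s) : ∀ᵐ ω ∂μ, Y i ω * Y i ω = Y i ω :=
  (hY.ae_eq_zero_or_one i hi).mono fun ω hω => by rcases hω with hω | hω <;> simp [hω]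

lemma indepFun (hi : i ∈ s) (hj : j ∈ s) (hij : i ≠ j) : IndepFun (Y i) (Y j) μ :=
  hY.iIndepFun.indepFun (i := ⟨i, hi⟩) (j := ⟨j, hj⟩) (by simpa using hij)

lemma integral_mul (hi : i ∈ s) (hj : j ∈ s) (hij : i ≠ j) :
    μ[fun ω => Y i ω * Y j ω] = p ^ 2 := by
  rw [(hY.indepFun hi hj hij).integral_fun_mul_eq_mul_integral
    (hY.measurable i hi).aestronglyMeasurable (hY.measurable j hj).aestronglyMeasurable,
    hY.integral_eq i hi, hY.integral_eq j hj, sq]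

variable [IsProbabilityMeasure μ]

lemma memLp (hi : i ∈ s) : MemLp (Y i) 2 μ :=
  memLp_two_of_ae_eq_zero_or_one (hY.measurable i hi).aestronglyMeasurable
    (hY.ae_eq_zero_or_one i hi)

lemma memLp_sum : MemLp (fun ω => ∑ i ∈ s, Y i ω) 2 μ :=
  memLp_finsetSum s fun _ hi => hY.memLp hi

lemma memLp_mul (hi : i ∈ s) (hj : j ∈ s) : MemLp (fun ω => Y i ω * Y j ω) 2 μ := by
  refine memLp_two_of_ae_eq_zero_or_one
    ((hY.measurable i hi).mul (hY.measurable j hj)).aestronglyMeasurable ?_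
  filter_upwards [hY.ae_eq_zero_or_one i hi, hY.ae_eq_zero_or_one j hj] with ω hiω hjω
  rcases hiω with h | h <;> simp [h, hjω]

lemma covariance_mul_left (hi : i ∈ s) (hj : j ∈ s) (hij : i ≠ j) :
    cov[Y i, fun ω => Y i ω * Y j ω; μ] = p ^ 2 * (1 - p) := by
  have hcube : μ[Y i * fun ω => Y i ω * Y j ω] = p ^ 2 := by
    refine (integral_congr_ae ?_).trans (hY.integral_mul hi hj hij)
    filter_upwards [hY.ae_mul_self hi] with ω hω
    simp only [Pi.mul_apply, ← mul_assoc, hω]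
  rw [covariance_eq_sub (hY.memLp hi) (hY.memLp_mul hi hj), hcube, hY.integral_eq i hi,
    hY.integral_mul hi hj hij]
  ring

variable [DecidableEq ι]

lemma covariance_eq (hi : i ∈ s) (hj : j ∈ s) :
    cov[Y i, Y j; μ] = if i = j then p * (1 - p) else 0 := by
  split_ifs with hij
  · subst hij
    have hsq : μ[Y i * Y i] = p :=
      (integral_congr_ae (hY.ae_mul_self hi)).trans (hY.integral_eq i hi)
    rw [covariance_eq_sub (hY.memLp hi) (hY.memLp hi), hsq, hY.integral_eq i hi]
    ring
  · exact (hY.indepFun hi hj hij).covariance_eq_zero (hY.memLp hi) (hY.memLp hj)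

lemma covariance_mul (hk : k ∈ s) (hi : i ∈ s) (hj : j ∈ s) (hij : i ≠ j) :
    cov[Y k, fun ω => Y i ω * Y j ω; μ] =
      (if k = i then p ^ 2 * (1 - p) else 0) + (if k = j then p ^ 2 * (1 - p) else 0) := by
  by_cases hki : k = i
  · subst hki
    rw [hY.covariance_mul_left hk hj hij, if_pos rfl, if_neg hij, add_zero]
  by_cases hkj : k = j
  · subst hkj
    rw [if_neg hki, if_pos rfl, zero_add]
    simp_rw [mul_comm (Y i _)]
    exact hY.covariance_mul_left hk hi (Ne.symm hij)
  rw [if_neg hki, if_neg hkj, add_zero]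
  have hindep : IndepFun (fun ω => Y i ω * Y j ω) (Y k) μ :=
    hY.iIndepFun.indepFun_mul_left (fun l => hY.measurable l l.2) ⟨i, hi⟩ ⟨j, hj⟩ ⟨k, hk⟩
      (by simpa [eq_comm] using hki) (by simpa [eq_comm] using hkj)
  exact hindep.symm.covariance_eq_zero (hY.memLp hk) (hY.memLp_mul hi hj)

lemma covariance_sum_self :
    cov[fun ω => ∑ i ∈ s, Y i ω, fun ω => ∑ i ∈ s, Y i ω; μ] = #s * (p * (1 - p)) := by
  rw [covariance_fun_sum_fun_sum' (fun i hi => hY.memLp hi) (fun i hi => hY.memLp hi)]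
  rw [sum_congr rfl fun i hi => (sum_congr rfl fun j hj => hY.covariance_eq hi hj).trans
    (sum_ite_eq s i _)]
  simp

lemma covariance_sum_mul (hi : i ∈ s) (hj : j ∈ s) (hij : i ≠ j) :
    cov[fun ω => ∑ k ∈ s, Y k ω, fun ω => Y i ω * Y j ω; μ] = 2 * (p ^ 2 * (1 - p)) := by
  rw [covariance_fun_sum_left' (fun k hk => hY.memLp hk) (hY.memLp_mul hi hj),
    sum_congr rfl fun k hk => hY.covariance_mul hk hi hj hij, sum_add_distrib, sum_ite_eq',
    sum_ite_eq', if_pos hi, if_pos hj]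
  ring

lemma covariance_sum_sum_mul {κ : Type*} (t : Finset κ) {f g : κ → ι}
    (hf : ∀ e ∈ t, f e ∈ s) (hg : ∀ e ∈ t, g e ∈ s) (hfg : ∀ e ∈ t, f e ≠ g e) :
    cov[fun ω => ∑ i ∈ s, Y i ω, fun ω => ∑ e ∈ t, Y (f e) ω * Y (g e) ω; μ] =
      #t * (2 * (p ^ 2 * (1 - p))) := by
  rw [covariance_fun_sum_right' (X := fun e ω => Y (f e) ω * Y (g e) ω)
      (fun e he => hY.memLp_mul (hf e he) (hg e he)) hY.memLp_sum,
    sum_congr rfl fun e he => hY.covariance_sum_mul (hf e he) (hg e he) (hfg e he)]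
  simp

end IsBernoulliFamily

end ProbabilityTheory

namespace PixelGrid

def grid (m : ℕ) : Finset (ℕ × ℕ) := Icc 1 m ×ˢ Icc 1 m

def shift (k : Fin 4) : ℕ × ℕ → ℕ × ℕ :=
  Prod.map (![(· - 1), (· + 1), id, id] k) (![id, id, (· - 1), (· + 1)] k)

/-- `⟨k, q⟩` stands for the ordered pair `(q, shift k q)` of adjacent grid cells. -/
def darts (m : ℕ) : Finset (Σ _ : Fin 4, ℕ × ℕ) :=
  univ.sigma fun k => (grid m).filter fun q => shift k q ∈ grid m

lemma mem_grid {m : ℕ} {q : ℕ × ℕ} : q ∈ grid m ↔ 1 ≤ q.1 ∧ q.1 ≤ m ∧ 1 ≤ q.2 ∧ q.2 ≤ m := by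
  simp [grid, and_assoc]

lemma card_grid (m : ℕ) : #(grid m) = m ^ 2 := by
  simp [grid, sq]

lemma card_filter_sub_one_mem_Icc (m : ℕ) :
    #((Icc 1 m).filter fun i => i - 1 ∈ Icc 1 m) = m - 1 := by
  rw [show (Icc 1 m).filter (fun i => i - 1 ∈ Icc 1 m) = Icc 2 m by ext; simp; omega]
  simp

lemma card_filter_add_one_mem_Icc (m : ℕ) :
    #((Icc 1 m).filter fun i => i + 1 ∈ Icc 1 m) = m - 1 := by
  rw [show (Icc 1 m).filter (fun i => i + 1 ∈ Icc 1 m) = Icc 1 (m - 1) by ext; simp; omega]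
  simp

lemma filter_prodMap_mem_product {α β : Type*} [DecidableEq α] [DecidableEq β] (s : Finset α)
    (t : Finset β) (f : α → α) (g : β → β) :
    (s ×ˢ t).filter (fun q => Prod.map f g q ∈ s ×ˢ t) =
      (s.filter fun a => f a ∈ s) ×ˢ (t.filter fun b => g b ∈ t) := by
  ext; simp only [mem_filter, mem_product, Prod.map_fst, Prod.map_snd]; tauto

lemma card_filter_prodMap_mem_grid (m : ℕ) (f g : ℕ → ℕ) :
    #((grid m).filter fun q => Prod.map f g q ∈ grid m) =
      #((Icc 1 m).filter fun i => f i ∈ Icc 1 m) * #((Icc 1 m).filter fun j => g j ∈ Icc 1 m) := by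
  rw [grid, filter_prodMap_mem_product, card_product]

lemma card_filter_shift_mem_grid (m : ℕ) (k : Fin 4) :
    #((grid m).filter fun q => shift k q ∈ grid m) = m * (m - 1) := by
  have hid : (Icc 1 m).filter (fun i => id i ∈ Icc 1 m) = Icc 1 m :=
    filter_true_of_mem fun _ => id
  have hsub := card_filter_sub_one_mem_Icc m
  have hadd := card_filter_add_one_mem_Icc m
  have hm : #(Icc 1 m) = m := by simp
  match k with
  | 0 => exact (card_filter_prodMap_mem_grid m (· - 1) id).trans (by rw [hid, hsub, hm, mul_comm])
  | 1 => exact (card_filter_prodMap_mem_grid m (· + 1) id).trans (by rw [hid, hadd, hm, mul_comm])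
  | 2 => exact (card_filter_prodMap_mem_grid m id (· - 1)).trans (by rw [hid, hsub, hm])
  | 3 => exact (card_filter_prodMap_mem_grid m id (· + 1)).trans (by rw [hid, hadd, hm])

lemma mem_darts {m : ℕ} {e : Σ _ : Fin 4, ℕ × ℕ} :
    e ∈ darts m ↔ e.2 ∈ grid m ∧ shift e.1 e.2 ∈ grid m := by
  simp [darts]

lemma card_darts (m : ℕ) : (#(darts m) : ℝ) = 4 * m * (m - 1) := by
  rw [darts, card_sigma]
  simp only [card_filter_shift_mem_grid, sum_const, card_univ, Fintype.card_fin, smul_eq_mul]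
  rcases m with _ | m
  · simp
  · push_cast [Nat.add_sub_cancel]
    ring

lemma shift_ne {m : ℕ} {q : ℕ × ℕ} (hq : q ∈ grid m) (k : Fin 4) : shift k q ≠ q := by
  rw [mem_grid] at hq
  fin_cases k <;> simp [shift, Prod.ext_iff] <;> omega

lemma shift_mem_grid_or_boundary {m : ℕ} {q : ℕ × ℕ} (hq : q ∈ grid m) (k : Fin 4) :
    shift k q ∈ grid m ∨ (shift k q).1 = 0 ∨ (shift k q).1 = m + 1 ∨ (shift k q).2 = 0 ∨
      (shift k q).2 = m + 1 := by
  rw [mem_grid] at hq ⊢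
  fin_cases k <;> simp [shift] <;> omega

lemma areaSum_eq_sum_grid (m : ℕ) (z : ℕ → ℕ → ℝ) :
    areaSum m z = 1 / (m : ℝ) * ∑ q ∈ grid m, uncurry z q := by
  rw [areaSum, grid, sum_product]
  rfl

lemma sum_darts_eq_sum_grid {m : ℕ} {z : ℕ → ℕ → ℝ}
    (hbdry : ∀ i j, (i = 0 ∨ i = m + 1 ∨ j = 0 ∨ j = m + 1) → z i j = 0) :
    ∑ e ∈ darts m, uncurry z e.2 * uncurry z (shift e.1 e.2) =
      ∑ q ∈ grid m, ∑ k, uncurry z q * uncurry z (shift k q) := by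
  rw [darts, sum_sigma, sum_comm]
  refine sum_congr rfl fun k _ => sum_filter_of_ne fun q hq hne => ?_
  refine (shift_mem_grid_or_boundary hq k).resolve_right fun hb => hne ?_
  simp [uncurry, hbdry _ _ hb]

lemma perimSum_eq {m : ℕ} {z : ℕ → ℕ → ℝ}
    (hbin : ∀ q ∈ grid m, uncurry z q = 0 ∨ uncurry z q = 1)
    (hbdry : ∀ i j, (i = 0 ∨ i = m + 1 ∨ j = 0 ∨ j = m + 1) → z i j = 0) :
    perimSum m z = 1 / (m : ℝ) * (4 * ∑ q ∈ grid m, uncurry z q -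
      ∑ e ∈ darts m, uncurry z e.2 * uncurry z (shift e.1 e.2)) := by
  rw [sum_darts_eq_sum_grid hbdry, mul_sum, ← sum_sub_distrib, perimSum, grid, sum_product]
  refine congrArg _ (sum_congr rfl fun i hi => sum_congr rfl fun j hj => ?_)
  rcases hbin (i, j) (mem_product.2 ⟨hi, hj⟩) with h | h <;>
    simp only [uncurry] at h <;>
    simp [h, Fin.sum_univ_four, shift, uncurry]

end PixelGrid

open PixelGrid

theorem covariance_area_perimeter_general
    {Ω : Type*} [MeasureSpace Ω] [IsProbabilityMeasure (ℙ : Measure Ω)]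
    (m : ℕ) (p : ℝ) (hp0 : 0 ≤ p) (hp1 : p ≤ 1)
    (Z : ℕ → ℕ → Ω → ℝ)
    (hmeas : ∀ i j, Measurable (Z i j))
    (hzero : ∀ i j, (i = 0 ∨ i = m + 1 ∨ j = 0 ∨ j = m + 1) → ∀ ω, Z i j ω = 0)
    (hone : ∀ i ∈ Finset.Icc 1 m, ∀ j ∈ Finset.Icc 1 m,
      ℙ {ω | Z i j ω = 1} = ENNReal.ofReal p)
    (hzeroP : ∀ i ∈ Finset.Icc 1 m, ∀ j ∈ Finset.Icc 1 m,
      ℙ {ω | Z i j ω = 0} = ENNReal.ofReal (1 - p))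
    (hind : iIndepFun
      (fun q : (Finset.Icc 1 m ×ˢ Finset.Icc 1 m : Finset (ℕ × ℕ)) => Z q.1.1 q.1.2) ℙ) :
    ∫ ω, (areaSum m (fun i j => Z i j ω) - ∫ ω', areaSum m (fun i j => Z i j ω') ∂ℙ) *
        (perimSum m (fun i j => Z i j ω) - ∫ ω', perimSum m (fun i j => Z i j ω') ∂ℙ) ∂ℙ =
      (1 / (m : ℝ) ^ 2) * (p * (1 - p)) *
        (4 * (m : ℝ) ^ 2 * (1 - 2 * p) + 8 * (m : ℝ) * p) := by
  let Y : ℕ × ℕ → Ω → ℝ := fun q ω => uncurry (fun i j => Z i j ω) q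
  have hbin : ∀ q ∈ grid m, ∀ᵐ ω ∂ℙ, Y q ω = 0 ∨ Y q ω = 1 := fun q hq =>
    ae_eq_zero_or_one_of_measure_eq (hmeas q.1 q.2) hp0 hp1
      (hone q.1 (mem_product.1 hq).1 q.2 (mem_product.1 hq).2)
      (hzeroP q.1 (mem_product.1 hq).1 q.2 (mem_product.1 hq).2)
  have hY : IsBernoulliFamily ℙ (grid m) Y p := by
    refine ⟨fun q _ => hmeas q.1 q.2, hbin, fun q hq => ?_, hind⟩
    change ∫ ω, Z q.1 q.2 ω = p
    rw [integral_eq_measureReal_of_ae_eq_zero_or_one (hmeas q.1 q.2) (hbin q hq), measureReal_def,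
      hone q.1 (mem_product.1 hq).1 q.2 (mem_product.1 hq).2, ENNReal.toReal_ofReal hp0]
  have hperim : (fun ω => perimSum m (fun i j => Z i j ω)) =ᵐ[ℙ] fun ω => 1 / (m : ℝ) *
      (4 * ∑ q ∈ grid m, Y q ω - ∑ e ∈ darts m, Y e.2 ω * Y (shift e.1 e.2) ω) := by
    filter_upwards [(eventually_all_finset _).2 hbin] with ω hω
    exact perimSum_eq hω fun i j hb => hzero i j hb ω
  have hT : MemLp (fun ω => ∑ e ∈ darts m, Y e.2 ω * Y (shift e.1 e.2) ω) 2 ℙ :=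
    memLp_finsetSum _ fun e he => hY.memLp_mul (mem_darts.1 he).1 (mem_darts.1 he).2
  change cov[_, _; ℙ] = _
  rw [covariance_congr_ae (.of_forall fun ω => areaSum_eq_sum_grid m _) hperim,
    covariance_const_mul_left, covariance_const_mul_right,
    covariance_fun_sub_right hY.memLp_sum (hY.memLp_sum.const_mul 4) hT,
    covariance_const_mul_right, hY.covariance_sum_self, hY.covariance_sum_sum_mul (darts m)
      (fun e he => (mem_darts.1 he).1) (fun e he => (mem_darts.1 he).2)
      (fun e he => (shift_ne (mem_darts.1 he).1 e.1).symm), card_grid, card_darts]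
  push_cast
  ring

/-- Under CSR, the covariance of the scaled area and the scaled perimeter is
`Cov(A_m, P_m) = (1/m²) p(1-p) (4m²(1 - 2p) + 8mp)`. -/
theorem covariance_area_perimeter
    {Ω : Type*} [MeasureSpace Ω] [IsProbabilityMeasure (ℙ : Measure Ω)]
    (m : ℕ) (hm : 3 ≤ m) (p : ℝ) (hp0 : 0 ≤ p) (hp1 : p ≤ 1)
    (Z : ℕ → ℕ → Ω → ℝ)
    (hmeas : ∀ i j, Measurable (Z i j))
    (hzero : ∀ i j, (i = 0 ∨ i = m + 1 ∨ j = 0 ∨ j = m + 1) → ∀ ω, Z i j ω = 0)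
    (hone : ∀ i ∈ Finset.Icc 1 m, ∀ j ∈ Finset.Icc 1 m,
      ℙ {ω | Z i j ω = 1} = ENNReal.ofReal p)
    (hzeroP : ∀ i ∈ Finset.Icc 1 m, ∀ j ∈ Finset.Icc 1 m,
      ℙ {ω | Z i j ω = 0} = ENNReal.ofReal (1 - p))
    (hind : iIndepFun
      (fun q : (Finset.Icc 1 m ×ˢ Finset.Icc 1 m : Finset (ℕ × ℕ)) => Z q.1.1 q.1.2) ℙ) :
    ∫ ω, (areaSum m (fun i j => Z i j ω) - ∫ ω', areaSum m (fun i j => Z i j ω') ∂ℙ) *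
        (perimSum m (fun i j => Z i j ω) - ∫ ω', perimSum m (fun i j => Z i j ω') ∂ℙ) ∂ℙ =
      (1 / (m : ℝ) ^ 2) * (p * (1 - p)) *
        (4 * (m : ℝ) ^ 2 * (1 - 2 * p) + 8 * (m : ℝ) * p) :=
  covariance_area_perimeter_general m p hp0 hp1 Z hmeas hzero hone hzeroP hind
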